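/- For all fixed real numbers a, b, c, the expression 2·k²·(cosh(c/k) − cosh(a/k)·cosh(b/k)) tends to c² − a² − b² as k → ∞. In particular, if cosh(c/k) = cosh(a/k)·cosh(b/k) holds for all k in a sequence tending to infinity, then c² = a² + b². -/

import Mathlib

/-!
Writing `sinh u = u · g u` with `g = dslope sinh 0` continuous and `g 0 = cosh 0 = 1`, the
half-angle formula gives `k² (cosh (x/k) - 1) = 2 k² sinh² (x/2k) = (x²/2) · g (x/2k)² → x²/2`.
Since `cosh (a+b) + cosh (a-b) = 2 cosh a cosh b`, the expression `2k² (cosh (c/k) - cosh (a/k) cosh (b/k))`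
is a linear combination of three such terms, with limit `c² - (a+b)²/2 - (a-b)²/2 = c² - a² - b²`.
-/

open Filter Topology

namespace Real

theorem sinh_eq_mul_dslope (u : ℝ) : sinh u = u * dslope sinh 0 u := by
  simpa using (sub_smul_dslope sinh 0 u).symm

theorem tendsto_dslope_sinh_zero : Tendsto (dslope sinh 0) (𝓝 0) (𝓝 1) := by
  have hcont : ContinuousAt (dslope sinh 0) 0 :=
    continuousAt_dslope_same.mpr (differentiable_sinh 0)
  simpa [dslope_same] using hcont.tendsto

theorem cosh_sub_one_eq_two_mul_sinh_half_sq (x : ℝ) : cosh x - 1 = 2 * sinh (x / 2) ^ 2 := by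
  have hsplit : x = x / 2 + x / 2 := by ring
  conv_lhs => rw [hsplit, cosh_add]
  linear_combination cosh_sq (x / 2)

theorem tendsto_sq_mul_cosh_div_sub_one (x : ℝ) :
    Tendsto (fun k : ℝ => k ^ 2 * (cosh (x / k) - 1)) atTop (𝓝 (x ^ 2 / 2)) := by
  have hhalf : Tendsto (fun k : ℝ => x / (k * 2)) atTop (𝓝 0) :=
    tendsto_const_nhds.div_atTop (tendsto_id.atTop_mul_const two_pos)
  have hlim := ((tendsto_dslope_sinh_zero.comp hhalf).pow 2).const_mul (x ^ 2 / 2)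
  rw [one_pow, mul_one] at hlim
  refine hlim.congr' ?_
  filter_upwards [eventually_ne_atTop 0] with k hk
  rw [Function.comp_apply, cosh_sub_one_eq_two_mul_sinh_half_sq, div_div,
    sinh_eq_mul_dslope (x / (k * 2))]
  field_simp

theorem two_mul_cosh_sub_cosh_mul_cosh (a b c : ℝ) :
    2 * (cosh c - cosh a * cosh b) =
      2 * (cosh c - 1) - (cosh (a + b) - 1) - (cosh (a - b) - 1) := by
  rw [cosh_add, cosh_sub]
  ring

theorem tendsto_two_mul_sq_mul_cosh_sub_cosh_mul_cosh (a b c : ℝ) :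
    Tendsto (fun k : ℝ => 2 * k ^ 2 * (cosh (c / k) - cosh (a / k) * cosh (b / k)))
      atTop (𝓝 (c ^ 2 - a ^ 2 - b ^ 2)) := by
  have hlim := (((tendsto_sq_mul_cosh_div_sub_one c).const_mul 2).sub
    (tendsto_sq_mul_cosh_div_sub_one (a + b))).sub (tendsto_sq_mul_cosh_div_sub_one (a - b))
  have hval : 2 * (c ^ 2 / 2) - (a + b) ^ 2 / 2 - (a - b) ^ 2 / 2 = c ^ 2 - a ^ 2 - b ^ 2 := by
    ring
  rw [hval] at hlim
  refine hlim.congr fun k => ?_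
  have hsum := two_mul_cosh_sub_cosh_mul_cosh (a / k) (b / k) (c / k)
  rw [← add_div, ← sub_div] at hsum
  linear_combination -k ^ 2 * hsum

end Real

/-- Bolyai §32 (VII): the hyperbolic Pythagorean theorem degenerates into the
Euclidean one as `k → ∞`: `2k²(cosh(c/k) − cosh(a/k)·cosh(b/k)) → c² − a² − b²`;
in particular, if the hyperbolic relation holds along a sequence of `k`'s tending
to infinity, then `c² = a² + b²`. -/
theorem bolyai_pythagoras_euclidean_limit (a b c : ℝ) :
    Tendsto (fun k : ℝ =>
        2 * k ^ 2 * (Real.cosh (c / k) - Real.cosh (a / k) * Real.cosh (b / k)))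
      atTop (nhds (c ^ 2 - a ^ 2 - b ^ 2)) ∧
    (∀ s : ℕ → ℝ, Tendsto s atTop atTop →
      (∀ n, Real.cosh (c / s n) = Real.cosh (a / s n) * Real.cosh (b / s n)) →
      c ^ 2 = a ^ 2 + b ^ 2) := by
  have hlim := Real.tendsto_two_mul_sq_mul_cosh_sub_cosh_mul_cosh a b c
  refine ⟨hlim, fun s hs hrel => ?_⟩
  have hzero : c ^ 2 - a ^ 2 - b ^ 2 = 0 := by
    refine tendsto_nhds_unique (hlim.comp hs) ?_
    simp only [Function.comp_def, hrel, sub_self, mul_zero, tendsto_const_nhds]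
  linarith
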